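/- Assume ρ(β^j) ≠ 0 for every j ∈ Z/(q^m−1)Z. Let r ∈ F^L, let (S_0,…,S_{t−1}) = rH^T, and set S(x) = Σ_{i=0}^{t−1} S_i x^i ∈ F[x]. Suppose e ∈ F^L satisfies 2·deg e ≤ t and r − e ∈ C(ρ,t), and suppose (λ, ω) ∈ F[x]² satisfies λ(0) = 1, gcd(λ, ω) = 1, deg ω < deg λ, 2·deg λ ≤ t, and λ(x)S(x) ≡ ω(x) (mod x^t). Then for every l ∈ L with e_l ≠ 0 and every j ∈ l, one has λ'(β^{−j}) ≠ 0 and the error value is recovered by e_l = −β^j · ω(β^{−j}) / (ρ(β^j) · λ'(β^{−j})), an identity in E (with e_l viewed in E via the inclusion F ⊆ E). -/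

import Mathlib

open Polynomial

noncomputable section

/-- The orbit of `j : ZMod N` under multiplication by `q`. -/
def qOrbit (N q : ℕ) (j : ZMod N) : Set (ZMod N) :=
  Set.range fun k : ℕ => (q : ZMod N) ^ k * j

/-- The set `L` of orbits of `ZMod N` under multiplication by `q`. -/
def orbitSet (N q : ℕ) : Set (Set (ZMod N)) :=
  {l | ∃ j : ZMod N, l = qOrbit N q j}

/-- `β ^ j` for a residue class `j`. -/
def bpow {E : Type*} [Monoid E] {N : ℕ} (β : E) (j : ZMod N) : E :=
  β ^ j.val

/-- The check-matrix entry `h_{i l} = ∑_{j ∈ l} ρ(β^j) β^{i j}`, as an element of `E`. -/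
def hEntry {F E : Type*} [CommSemiring F] [CommSemiring E] [Algebra F E] {N : ℕ}
    (β : E) (ρ : Polynomial F) (i : ℕ) (l : Set (ZMod N)) : E :=
  ∑ᶠ j ∈ l, Polynomial.aeval (bpow β j) ρ * bpow β j ^ i

/-- The code `C(ρ, t)` inside `F^L`. -/
def codeSet (F E : Type*) [Field F] [Field E] [Algebra F E] (N q : ℕ)
    (β : E) (ρ : Polynomial F) (t : ℕ) : Set (↥(orbitSet N q) → F) :=
  {c | ∀ i < t, ∑ᶠ l : orbitSet N q,
    algebraMap F E (c l) * hEntry β ρ i (l : Set (ZMod N)) = 0}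

open scoped Classical in
/-- `deg c = ∑_{l : c_l ≠ 0} |l|`. -/
def wdeg {F : Type*} [Zero F] {N q : ℕ} (c : ↥(orbitSet N q) → F) : ℕ :=
  ∑ᶠ l : orbitSet N q, if c l ≠ 0 then (l : Set (ZMod N)).ncard else 0

/-!
Since `q` is invertible modulo `q ^ m - 1`, the orbits partition `ZMod (q ^ m - 1)`, so every
sum over `L` unfolds to a sum over residues `j`. The syndromes of `r` are those of `e`, namely
`S_i = ∑_{j ∈ T} y_j x_j ^ i` with `T = {j | e_{l(j)} ≠ 0}`, locators `x_j = β ^ j` and values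
`y_j = e_{l(j)} ρ(β ^ j)`. The error locator `Λ = ∏ (1 - x_j X)` and evaluator
`Ω = ∑ y_j ∏_{k ≠ j} (1 - x_k X)` satisfy `Λ S ≡ Ω [X ^ t]` by the geometric series.
Cross-multiplying with `λ S ≡ ω` leaves `Λ ω - λ Ω`, which is divisible by `X ^ t` but of
degree `< t` because `2 |T| ≤ t` and `2 deg λ ≤ t`; hence `Λ ω = λ Ω`. Coprimality of both pairs
and `λ(0) = Λ(0) = 1` give `λ = Λ` and `ω = Ω`. Forney's formula then evaluates `Ω` and `Λ'` at
`x_j⁻¹`, where all factors except the `j`-th are nonzero since the `x_k` are distinct.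
-/

open Finset

lemma map_eq_sum_range_of_degree_lt {R S : Type*} [Semiring R] [Semiring S] (f : R →+* S)
    {p : R[X]} {t : ℕ} (hp : p.degree < t) {s : ℕ → S} (hs : ∀ i < t, f (p.coeff i) = s i) :
    p.map f = ∑ i ∈ range t, C (s i) * X ^ i := by
  ext n
  simp only [coeff_map, finsetSum_coeff, coeff_C_mul_X_pow, sum_ite_eq, mem_range]
  split_ifs with hn
  · exact hs n hn
  · rw [coeff_eq_zero_of_degree_lt (hp.trans_le (by exact_mod_cast not_lt.1 hn)), map_zero]

section KeyEquation

variable {R : Type*} [CommRing R]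

lemma degree_mul_lt_of_natDegree_le_of_degree_lt {p q : R[X]} {m n t : ℕ}
    (hp : p.natDegree ≤ m) (hq : q.degree < n) (hmn : m + n ≤ t) : (p * q).degree < t := by
  rcases eq_or_ne q 0 with rfl | hq0
  · simp
  have hqn : q.natDegree < n := (natDegree_lt_iff_degree_lt hq0).2 hq
  refine degree_le_natDegree.trans_lt ?_
  exact_mod_cast natDegree_mul_le.trans_lt (by omega)

variable [IsDomain R]

lemma mul_eq_mul_of_X_pow_dvd_mul_sub {s a b c d : R[X]} {t : ℕ}
    (hab : X ^ t ∣ a * s - b) (hcd : X ^ t ∣ c * s - d)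
    (had : (a * d).degree < t) (hcb : (c * b).degree < t) : a * d = c * b := by
  have hdvd : X ^ t ∣ a * d - c * b := by
    have h := dvd_sub (dvd_mul_of_dvd_right hab c) (dvd_mul_of_dvd_right hcd a)
    rwa [show c * (a * s - b) - a * (c * s - d) = a * d - c * b by ring] at h
  refine sub_eq_zero.1 (eq_zero_of_dvd_of_degree_lt hdvd ?_)
  rw [degree_X_pow]
  exact (degree_sub_le _ _).trans_lt (max_lt had hcb)

lemma eq_and_eq_of_mul_eq_mul_of_isCoprime {a b c d : R[X]} (hab : IsCoprime a b)
    (hcd : IsCoprime c d) (h : a * d = c * b) (ha : a.eval 0 = 1) (hc : c.eval 0 = 1) :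
    a = c ∧ b = d := by
  have ha0 : a ≠ 0 := fun h0 => by simp [h0] at ha
  obtain ⟨u, hu⟩ : a ∣ c := hab.dvd_of_dvd_mul_right ⟨d, h.symm⟩
  obtain ⟨v, hv⟩ : c ∣ a := hcd.dvd_of_dvd_mul_right ⟨b, h⟩
  have hunit : IsUnit u := IsUnit.of_mul_eq_one v <| mul_left_cancel₀ ha0 <| by
    rw [mul_one, ← mul_assoc, ← hu, ← hv]
  obtain ⟨r, -, rfl⟩ := Polynomial.isUnit_iff.1 hunit
  have hr : r = 1 := by simpa [hu, ha] using hc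
  have hac : a = c := by rw [hu, hr, C_1, mul_one]
  refine ⟨hac, mul_left_cancel₀ ha0 ?_⟩
  rw [h, hac]

end KeyEquation

section ErrorLocator

variable {K ι : Type*} [Field K] (T : Finset ι) (x y : ι → K)

def errorLocator : K[X] := ∏ j ∈ T, (1 - C (x j) * X)

def syndromePoly (t : ℕ) : K[X] :=
  ∑ i ∈ range t, C (∑ j ∈ T, y j * x j ^ i) * X ^ i

lemma natDegree_one_sub_C_mul_X_le (a : K) : (1 - C a * X).natDegree ≤ 1 := by
  rw [sub_eq_neg_add, ← neg_mul, ← C_neg, ← C_1]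
  exact natDegree_linear_le

lemma natDegree_errorLocator_le : (errorLocator T x).natDegree ≤ #T :=
  (natDegree_prod_le _ _).trans <| by
    simpa using sum_le_sum fun k (_ : k ∈ T) => natDegree_one_sub_C_mul_X_le (x k)

lemma eval_zero_errorLocator : (errorLocator T x).eval 0 = 1 := by
  simp [errorLocator, eval_prod]

lemma eval_errorLocator (z : K) : (errorLocator T x).eval z = ∏ k ∈ T, (1 - x k * z) := by
  simp [errorLocator, eval_prod]

lemma eval_errorLocator_inv_of_mem {j : ι} (hj : j ∈ T) (hx0 : x j ≠ 0) :
    (errorLocator T x).eval (x j)⁻¹ = 0 := by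
  rw [eval_errorLocator]
  exact prod_eq_zero hj (by rw [mul_inv_cancel₀ hx0, sub_self])

variable [DecidableEq ι]

def errorEvaluator : K[X] :=
  ∑ j ∈ T, C (y j) * errorLocator (T.erase j) x

lemma degree_errorEvaluator_lt : (errorEvaluator T x y).degree < #T := by
  refine (degree_sum_le _ _).trans_lt <|
    (Finset.sup_lt_iff (WithBot.bot_lt_coe _)).2 fun j hj => ?_
  refine degree_le_of_natDegree_le ((natDegree_C_mul_le _ _).trans
    (natDegree_errorLocator_le _ _)) |>.trans_lt ?_
  rw [card_erase_of_mem hj]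
  exact_mod_cast Nat.sub_lt (card_pos.2 ⟨j, hj⟩) one_pos

lemma errorLocator_eq_mul_erase {j : ι} (hj : j ∈ T) :
    errorLocator T x = (1 - C (x j) * X) * errorLocator (T.erase j) x :=
  (mul_prod_erase T _ hj).symm

lemma X_pow_dvd_errorLocator_mul_syndromePoly_sub (t : ℕ) :
    X ^ t ∣ errorLocator T x * syndromePoly T x y t - errorEvaluator T x y := by
  have hS : syndromePoly T x y t = ∑ j ∈ T, C (y j) * ∑ i ∈ range t, (C (x j) * X) ^ i := by
    simp only [syndromePoly, map_sum, Finset.mul_sum, sum_mul, mul_pow, ← C_pow, C_mul]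
    rw [Finset.sum_comm]
    refine sum_congr rfl fun j _ => sum_congr rfl fun i _ => by ring
  have hterm : ∀ j ∈ T, errorLocator T x * (C (y j) * ∑ i ∈ range t, (C (x j) * X) ^ i) -
      C (y j) * errorLocator (T.erase j) x =
      -(C (y j) * errorLocator (T.erase j) x * C (x j ^ t)) * X ^ t := by
    intro j hj
    rw [errorLocator_eq_mul_erase T x hj, C_pow]
    linear_combination -(C (y j) * errorLocator (T.erase j) x) * geom_sum_mul (C (x j) * X) t
  rw [hS, Finset.mul_sum, errorEvaluator, ← sum_sub_distrib, sum_congr rfl hterm]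
  exact dvd_sum fun j _ => dvd_mul_left _ _

lemma eval_errorLocator_erase_inv_ne_zero (hx : Set.InjOn x T) {j : ι} (hj : j ∈ T) :
    (errorLocator (T.erase j) x).eval (x j)⁻¹ ≠ 0 := by
  rw [eval_errorLocator, prod_ne_zero_iff]
  intro k hk hzero
  obtain ⟨hkj, hkT⟩ := mem_erase.1 hk
  have hxj : x j ≠ 0 := fun h => by simp [h] at hzero
  exact hkj (hx hkT hj ((mul_inv_eq_one₀ hxj).1 (sub_eq_zero.1 hzero).symm))

lemma eval_errorEvaluator_inv {j : ι} (hj : j ∈ T) (hx0 : x j ≠ 0) :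
    (errorEvaluator T x y).eval (x j)⁻¹ =
      y j * (errorLocator (T.erase j) x).eval (x j)⁻¹ := by
  rw [errorEvaluator, eval_finsetSum, sum_eq_single_of_mem j hj, eval_mul, eval_C]
  intro k _ hkj
  rw [eval_mul, eval_errorLocator_inv_of_mem _ x (mem_erase.2 ⟨hkj.symm, hj⟩) hx0, mul_zero]

lemma eval_derivative_errorLocator_inv {j : ι} (hj : j ∈ T) (hx0 : x j ≠ 0) :
    (derivative (errorLocator T x)).eval (x j)⁻¹ =
      -x j * (errorLocator (T.erase j) x).eval (x j)⁻¹ := by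
  have hroot : (1 - C (x j) * X).eval (x j)⁻¹ = 0 := by simp [mul_inv_cancel₀ hx0]
  rw [errorLocator_eq_mul_erase T x hj, derivative_mul, eval_add, eval_mul, eval_mul, hroot]
  simp

theorem forney_formula (hx : Set.InjOn x T) {j : ι} (hj : j ∈ T) (hx0 : x j ≠ 0) :
    (derivative (errorLocator T x)).eval (x j)⁻¹ ≠ 0 ∧
      -(x j * (errorEvaluator T x y).eval (x j)⁻¹) /
        (derivative (errorLocator T x)).eval (x j)⁻¹ = y j := by
  have hP := eval_errorLocator_erase_inv_ne_zero T x hx hj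
  rw [eval_derivative_errorLocator_inv T x hj hx0, eval_errorEvaluator_inv T x y hj hx0]
  have hden : -x j * (errorLocator (T.erase j) x).eval (x j)⁻¹ ≠ 0 :=
    mul_ne_zero (neg_ne_zero.2 hx0) hP
  refine ⟨hden, ?_⟩
  rw [div_eq_iff hden]
  ring

lemma isCoprime_one_sub_C_mul_X {a : K} (ha : a ≠ 0) {p : K[X]} (hp : p.eval a⁻¹ ≠ 0) :
    IsCoprime (1 - C a * X) p := by
  have hlin : (1 - C a * X) = C (-a) * X + C 1 := by rw [C_neg, C_1]; ring
  have hirr : Irreducible (1 - C a * X) := by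
    rw [hlin]
    exact irreducible_of_degree_eq_one (degree_linear (neg_ne_zero.2 ha))
  refine (hirr.coprime_iff_not_dvd).2 fun hdvd => hp ?_
  exact eval_eq_zero_of_dvd_of_eval_eq_zero hdvd (by simp [mul_inv_cancel₀ ha])

theorem isCoprime_errorLocator_errorEvaluator (hx : Set.InjOn x T) (hx0 : ∀ j ∈ T, x j ≠ 0)
    (hy : ∀ j ∈ T, y j ≠ 0) : IsCoprime (errorLocator T x) (errorEvaluator T x y) :=
  IsCoprime.prod_left fun j hj => isCoprime_one_sub_C_mul_X (hx0 j hj) <| by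
    rw [eval_errorEvaluator_inv T x y hj (hx0 j hj)]
    exact mul_ne_zero (hy j hj) (eval_errorLocator_erase_inv_ne_zero T x hx hj)

end ErrorLocator

theorem eq_errorLocator_of_key_equation {K ι : Type*} [Field K] [DecidableEq ι]
    {T : Finset ι} {x y : ι → K} (hx : Set.InjOn x T) (hx0 : ∀ j ∈ T, x j ≠ 0)
    (hy : ∀ j ∈ T, y j ≠ 0)
    {t : ℕ} (hT : 2 * #T ≤ t) {lam om : K[X]} (hlam0 : lam.eval 0 = 1)
    (hcop : IsCoprime lam om) (hom : om.degree < lam.degree) (hlam : 2 * lam.natDegree ≤ t)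
    (hkey : X ^ t ∣ lam * syndromePoly T x y t - om) :
    lam = errorLocator T x ∧ om = errorEvaluator T x y := by
  have hom' : om.degree < lam.natDegree := hom.trans_le degree_le_natDegree
  have hcross := mul_eq_mul_of_X_pow_dvd_mul_sub hkey
    (X_pow_dvd_errorLocator_mul_syndromePoly_sub T x y t)
    (degree_mul_lt_of_natDegree_le_of_degree_lt le_rfl (degree_errorEvaluator_lt T x y)
      (by omega))
    (degree_mul_lt_of_natDegree_le_of_degree_lt (natDegree_errorLocator_le T x) hom' (by omega))
  exact eq_and_eq_of_mul_eq_mul_of_isCoprime hcop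
    (isCoprime_errorLocator_errorEvaluator T x y hx hx0 hy) hcross hlam0
    (eval_zero_errorLocator T x)

section Orbits

variable {N q : ℕ}

def orbitOf (N q : ℕ) (j : ZMod N) : orbitSet N q := ⟨qOrbit N q j, j, rfl⟩

lemma mem_qOrbit_self (j : ZMod N) : j ∈ qOrbit N q j := ⟨0, by simp⟩

lemma qOrbit_eq_of_mem (hq : IsOfFinOrder (q : ZMod N)) {j k : ZMod N}
    (h : j ∈ qOrbit N q k) : qOrbit N q j = qOrbit N q k := by
  obtain ⟨n, hn, hqn⟩ := isOfFinOrder_iff_pow_eq_one.1 hq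
  obtain ⟨a, rfl⟩ := h
  have hinv : (q : ZMod N) ^ ((n - 1) * a) * (q : ZMod N) ^ a = 1 := by
    rw [← pow_add, ← add_one_mul, Nat.sub_one_add_one hn.ne', pow_mul, hqn, one_pow]
  ext z
  constructor
  · rintro ⟨b, rfl⟩
    exact ⟨b + a, by simp only [pow_add, mul_assoc]⟩
  · rintro ⟨b, rfl⟩
    refine ⟨b + (n - 1) * a, ?_⟩
    dsimp only
    rw [pow_add, mul_assoc, ← mul_assoc (_ ^ ((n - 1) * a)), hinv, one_mul]

lemma mem_iff_orbitOf_eq (hq : IsOfFinOrder (q : ZMod N)) {j : ZMod N} {l : orbitSet N q} :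
    j ∈ (l : Set (ZMod N)) ↔ orbitOf N q j = l := by
  obtain ⟨_, k, rfl⟩ := l
  exact ⟨fun h => Subtype.ext (qOrbit_eq_of_mem hq h), fun h => h ▸ mem_qOrbit_self j⟩

variable [NeZero N]

theorem finsum_orbitSet_finsum_mem {M : Type*} [AddCommMonoid M]
    (hq : IsOfFinOrder (q : ZMod N)) (g : orbitSet N q → ZMod N → M) :
    ∑ᶠ l : orbitSet N q, ∑ᶠ j ∈ (l : Set (ZMod N)), g l j =
      ∑ j, g (orbitOf N q j) j := by
  classical
  have := Fintype.ofFinite (orbitSet N q)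
  have hl : ∀ l : orbitSet N q,
      (l : Set (ZMod N)) = ↑({j | orbitOf N q j = l} : Finset (ZMod N)) := fun l => by
    ext j
    simp [mem_iff_orbitOf_eq hq]
  simp_rw [hl, finsum_mem_coe_finset, finsum_eq_sum_of_fintype]
  rw [← Finset.sum_fiberwise univ (orbitOf N q)]
  refine sum_congr rfl fun l _ => sum_congr rfl fun j hj => ?_
  rw [(mem_filter.1 hj).2]

lemma wdeg_eq_card {F : Type*} [Zero F] [DecidableEq F] (hq : IsOfFinOrder (q : ZMod N))
    (e : orbitSet N q → F) : wdeg e = #{j | e (orbitOf N q j) ≠ 0} := by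
  rw [card_filter, ← finsum_orbitSet_finsum_mem hq fun l _ => if e l ≠ 0 then 1 else 0, wdeg]
  refine finsum_congr fun l => ?_
  split_ifs <;> simp_all

lemma finsum_mul_hEntry {F E : Type*} [CommSemiring F] [CommSemiring E] [NoZeroDivisors E]
    [Algebra F E] (hq : IsOfFinOrder (q : ZMod N)) (β : E) (ρ : F[X]) (c : orbitSet N q → F)
    (i : ℕ) :
    ∑ᶠ l : orbitSet N q, algebraMap F E (c l) * hEntry β ρ i (l : Set (ZMod N)) =
      ∑ j, algebraMap F E (c (orbitOf N q j)) * aeval (bpow β j) ρ * bpow β j ^ i := by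
  simp_rw [hEntry, mul_finsum_mem, ← mul_assoc]
  exact finsum_orbitSet_finsum_mem hq _

lemma finsum_mul_hEntry_eq_of_sub_mem_codeSet {F E : Type*} [Field F] [Field E] [Algebra F E]
    (hq : IsOfFinOrder (q : ZMod N)) {β : E} {ρ : F[X]} {t : ℕ} {r e : orbitSet N q → F}
    (hre : r - e ∈ codeSet F E N q β ρ t) {i : ℕ} (hi : i < t) :
    ∑ᶠ l : orbitSet N q, algebraMap F E (r l) * hEntry β ρ i (l : Set (ZMod N)) =
      ∑ j, algebraMap F E (e (orbitOf N q j)) * aeval (bpow β j) ρ * bpow β j ^ i := by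
  have h := hre i hi
  rw [finsum_mul_hEntry hq] at h ⊢
  simpa only [Pi.sub_apply, map_sub, sub_mul, sum_sub_distrib, sub_eq_zero] using h

end Orbits

lemma bpow_injective {E : Type*} [Monoid E] {N : ℕ} [NeZero N] {β : E} (hβ : orderOf β = N) :
    Function.Injective (bpow β : ZMod N → E) := fun j k h =>
  ZMod.val_injective N <| pow_injOn_Iio_orderOf (x := β)
    (Set.mem_Iio.2 (hβ ▸ ZMod.val_lt j)) (Set.mem_Iio.2 (hβ ▸ ZMod.val_lt k)) h

lemma bpow_ne_zero {E : Type*} [MonoidWithZero E] [Nontrivial E] {N : ℕ} [NeZero N] {β : E}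
    (hβ : orderOf β = N) (j : ZMod N) : bpow β j ≠ 0 :=
  ((isOfFinOrder_iff_pow_eq_one.2 ⟨N, NeZero.pos N, hβ ▸ pow_orderOf_eq_one β⟩).isUnit.pow
    _).ne_zero

lemma isOfFinOrder_natCast_zmod_pow_sub_one {q m : ℕ} (h : 1 < q ^ m) :
    IsOfFinOrder (q : ZMod (q ^ m - 1)) := by
  have hm : 0 < m := Nat.pos_of_ne_zero fun hm => by simp [hm] at h
  have hself := ZMod.natCast_self (q ^ m - 1)
  rw [Nat.cast_sub h.le, Nat.cast_one, sub_eq_zero, Nat.cast_pow] at hself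
  exact isOfFinOrder_iff_pow_eq_one.2 ⟨m, hm, hself⟩

theorem decode_error_values_general (q m : ℕ)
    (F E : Type*) [Field F] [Field E] [Fintype E] [Algebra F E]
    (hE : Fintype.card E = q ^ m)
    (β : E) (hβ : orderOf β = q ^ m - 1) (ρ : Polynomial F) (t : ℕ)
    (hρ : ∀ j : ZMod (q ^ m - 1), Polynomial.aeval (bpow β j) ρ ≠ 0)
    (r : ↥(orbitSet (q ^ m - 1) q) → F)
    (S : Polynomial F) (hSdeg : S.degree < t)
    (hS : ∀ i < t, algebraMap F E (S.coeff i) =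
      ∑ᶠ l : orbitSet (q ^ m - 1) q,
        algebraMap F E (r l) * hEntry β ρ i (l : Set (ZMod (q ^ m - 1))))
    (e : ↥(orbitSet (q ^ m - 1) q) → F) (he : 2 * wdeg e ≤ t)
    (hre : r - e ∈ codeSet F E (q ^ m - 1) q β ρ t)
    (lam om : Polynomial F) (hlam0 : lam.coeff 0 = 1) (hcop : IsCoprime lam om)
    (homdeg : om.degree < lam.degree) (hlamt : 2 * lam.natDegree ≤ t)
    (hkey : (X : Polynomial F) ^ t ∣ lam * S - om) :
    ∀ l : ↥(orbitSet (q ^ m - 1) q), e l ≠ 0 → ∀ j ∈ (l : Set (ZMod (q ^ m - 1))),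
      Polynomial.aeval ((bpow β j)⁻¹) (derivative lam) ≠ 0 ∧
      algebraMap F E (e l) =
        -(bpow β j * Polynomial.aeval ((bpow β j)⁻¹) om) /
          (Polynomial.aeval (bpow β j) ρ *
            Polynomial.aeval ((bpow β j)⁻¹) (derivative lam)) := by
  classical
  have hN : 1 < q ^ m := hE ▸ Fintype.one_lt_card
  have : NeZero (q ^ m - 1) := ⟨by omega⟩
  have hq := isOfFinOrder_natCast_zmod_pow_sub_one hN
  set T : Finset (ZMod (q ^ m - 1)) := {j | e (orbitOf _ q j) ≠ 0}
  set y := fun j => algebraMap F E (e (orbitOf _ q j)) * aeval (bpow β j) ρ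
  have hx : Set.InjOn (bpow β) T := (bpow_injective hβ).injOn
  have hx0 : ∀ j ∈ T, bpow β j ≠ 0 := fun j _ => bpow_ne_zero hβ j
  have hy : ∀ j ∈ T, y j ≠ 0 := fun j hj =>
    mul_ne_zero (by simpa [T] using hj) (hρ j)
  have hsyn : S.map (algebraMap F E) = syndromePoly T (bpow β) y t :=
    map_eq_sum_range_of_degree_lt _ hSdeg fun i hi => by
      rw [hS i hi, finsum_mul_hEntry_eq_of_sub_mem_codeSet hq hre hi]
      refine (sum_filter_of_ne fun j _ h => ?_).symm
      simpa using left_ne_zero_of_mul (left_ne_zero_of_mul h)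
  obtain ⟨hlam, hom⟩ := eq_errorLocator_of_key_equation (t := t)
    (lam := lam.map (algebraMap F E)) (om := om.map (algebraMap F E)) hx hx0 hy
    (by rwa [← wdeg_eq_card hq])
    (by rw [← coeff_zero_eq_eval_zero, coeff_map, hlam0, map_one])
    (by simpa using hcop.map (mapRingHom (algebraMap F E)))
    (by rwa [degree_map, degree_map]) (by rwa [natDegree_map])
    (by simpa [hsyn] using Polynomial.map_dvd (algebraMap F E) hkey)
  intro l hl j hj
  have horb : orbitOf _ q j = l := (mem_iff_orbitOf_eq hq).1 hj
  have hjT : j ∈ T := by simpa [T, horb]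
  have heval : ∀ (p : F[X]) (z : E), aeval z p = (p.map (algebraMap F E)).eval z :=
    fun p z => (eval_map_algebraMap p z).symm
  obtain ⟨hder, hval⟩ := forney_formula T (bpow β) y hx hjT (hx0 j hjT)
  rw [heval om, heval (derivative lam), ← derivative_map, hlam, hom]
  refine ⟨hder, ?_⟩
  rw [mul_comm (aeval _ ρ), ← div_div, hval, eq_div_iff (hρ j)]
  simp only [y, horb]

/-- Error evaluation: under the hypotheses of the decoding lemma, for every orbit `l` with
`e_l ≠ 0` and every `j ∈ l`, one has `λ'(β^{−j}) ≠ 0` and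
`e_l = −β^j ω(β^{−j}) / (ρ(β^j) λ'(β^{−j}))`, an identity in `E`. -/
theorem decode_error_values (q m : ℕ) (hm : 0 < m) (hqm : Nat.Coprime q m)
    (F E : Type*) [Field F] [Field E] [Fintype F] [Fintype E] [Algebra F E]
    (hF : Fintype.card F = q) (hE : Fintype.card E = q ^ m)
    (β : E) (hβ : orderOf β = q ^ m - 1) (ρ : Polynomial F) (t : ℕ) (ht : 0 < t)
    (hρ : ∀ j : ZMod (q ^ m - 1), Polynomial.aeval (bpow β j) ρ ≠ 0)
    (r : ↥(orbitSet (q ^ m - 1) q) → F)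
    (S : Polynomial F) (hSdeg : S.degree < t)
    (hS : ∀ i < t, algebraMap F E (S.coeff i) =
      ∑ᶠ l : orbitSet (q ^ m - 1) q,
        algebraMap F E (r l) * hEntry β ρ i (l : Set (ZMod (q ^ m - 1))))
    (e : ↥(orbitSet (q ^ m - 1) q) → F) (he : 2 * wdeg e ≤ t)
    (hre : r - e ∈ codeSet F E (q ^ m - 1) q β ρ t)
    (lam om : Polynomial F) (hlam0 : lam.coeff 0 = 1) (hcop : IsCoprime lam om)
    (homdeg : om.degree < lam.degree) (hlamt : 2 * lam.natDegree ≤ t)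
    (hkey : (X : Polynomial F) ^ t ∣ lam * S - om) :
    ∀ l : ↥(orbitSet (q ^ m - 1) q), e l ≠ 0 → ∀ j ∈ (l : Set (ZMod (q ^ m - 1))),
      Polynomial.aeval ((bpow β j)⁻¹) (derivative lam) ≠ 0 ∧
      algebraMap F E (e l) =
        -(bpow β j * Polynomial.aeval ((bpow β j)⁻¹) om) /
          (Polynomial.aeval (bpow β j) ρ *
            Polynomial.aeval ((bpow β j)⁻¹) (derivative lam)) :=
  decode_error_values_general q m F E hE β hβ ρ t hρ r S hSdeg hS e he hre lam om hlam0 hcop homdeg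
    hlamt hkey
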